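/- Houghton's group H_n is amenable for every n ≥ 1, being an extension of an abelian group by a locally finite group: there is a short exact sequence 1 → Σ_{n,∞} → H_n → ℤ^{n−1} → 1 where Σ_{n,∞} is locally finite (hence amenable) and ℤ^{n−1} is abelian (hence amenable). -/

import Mathlib

def Translates (n : ℕ) (g : Fin n × ℕ → Fin n × ℕ) (m : Fin n → ℤ) : Prop :=
  ∃ K : Finset (Fin n × ℕ), ∀ x : Fin n × ℕ, x ∉ K →
    (g x).1 = x.1 ∧ ((g x).2 : ℤ) = (x.2 : ℤ) + m x.1

def IsEventualTranslation (n : ℕ) (g : Fin n × ℕ → Fin n × ℕ) : Prop :=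
  ∃ m : Fin n → ℤ, Translates n g m

/-- Houghton's group `H_n`, as the subgroup of `Perm Y_n` consisting of the
eventual translations. -/
def Houghton (n : ℕ) : Subgroup (Equiv.Perm (Fin n × ℕ)) where
  carrier := {g | IsEventualTranslation n ⇑g}
  one_mem' := ⟨0, ∅, by intro x _; simp⟩
  mul_mem' := by
    rintro a b ⟨ma, Ka, ha⟩ ⟨mb, Kb, hb⟩
    refine ⟨fun i => mb i + ma i,
      Kb ∪ Ka.preimage b (b.injective.injOn), ?_⟩
    intro x hx
    simp only [Finset.mem_union, Finset.mem_preimage, not_or] at hx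
    have h1 := hb x hx.1
    have h2 := ha (b x) hx.2
    refine ⟨by simp [Equiv.Perm.mul_apply, h2.1, h1.1], ?_⟩
    have : ((a (b x)).2 : ℤ) = ((b x).2 : ℤ) + ma (b x).1 := h2.2
    simp only [Equiv.Perm.mul_apply, this, h1.1, h1.2]
    ring
  inv_mem' := by
    rintro g ⟨m, K, hK⟩
    refine ⟨fun i => -m i, K.image g, ?_⟩
    intro x hx
    have hy : g.symm x ∉ K := by
      intro h
      exact hx (Finset.mem_image.2 ⟨g.symm x, h, by simp⟩)
    have h := hK (g.symm x) hy
    rw [g.apply_symm_apply] at h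
    refine ⟨h.1.symm, ?_⟩
    have h2 := h.2
    rw [← h.1] at h2
    simp only [Equiv.Perm.inv_def]
    omega
/-- The finitary symmetric group `Σ_{n,∞}`, the subgroup of `Perm Y_n` of
finitely supported permutations. -/
def FinitarySymm (n : ℕ) : Subgroup (Equiv.Perm (Fin n × ℕ)) where
  carrier := {g | {x | g x ≠ x}.Finite}
  one_mem' := by simp
  mul_mem' := by
    intro a b ha hb
    refine (ha.union hb).subset ?_
    intro x hx
    by_cases h : b x = x
    · exact Or.inl (by simpa [Equiv.Perm.mul_apply, h] using hx)
    · exact Or.inr h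
  inv_mem' := by
    intro g hg
    refine hg.subset ?_
    intro x hx h
    apply hx
    show g⁻¹ x = x
    rw [Equiv.Perm.inv_def]
    exact (Equiv.symm_apply_eq g).2 h.symm

/-- A (discrete) group is amenable if it admits a Følner sequence: a sequence
of nonempty finite subsets `F i` with `|g·F i ∆ F i| / |F i| → 0` for every
`g ∈ G`. -/
def IsAmenable (G : Type*) [Group G] : Prop :=
  letI := Classical.decEq G
  ∃ F : ℕ → Finset G, (∀ i, (F i).Nonempty) ∧ ∀ g : G,
    Filter.Tendsto
      (fun i => (((symmDiff ((F i).image (fun x => g * x)) (F i)).card : ℝ)) / (F i).card)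
      Filter.atTop (nhds 0)

/-! Every `g ∈ H_n` eventually translates each ray `i` by some `m i`; the vector `m` is a
homomorphism `H_n → ℤ^n` with kernel `Σ_{n,∞}`, and counting the points below a large height shows
that its coordinates sum to zero, so dropping the last one gives `H_n → ℤ^{n-1}`, surjective via
products of ray shifts. Amenability of the extension is witnessed by the Følner sets
`shift([0, i]^{n-1}) * K_i`, where `K_i` is the finite group of permutations supported below height
`(i + 1)^2`: for `g` fixed and `i` large, `g` moves the shift by `v` to the shift by `v + m` modulo
`K_i`. -/

open Finset Filter Topology
open scoped Pointwise

section Amenability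

variable {G : Type*} [Group G] [DecidableEq G]

lemma card_symmDiff_image_mul (g : G) (F : Finset G) :
    #(symmDiff (F.image (g * ·)) F) = 2 * (#F - #(F.image (g * ·) ∩ F)) := by
  have hcard : #(F.image (g * ·)) = #F := card_image_of_injective _ (mul_right_injective g)
  rw [symmDiff_def, sup_eq_union, card_union_of_disjoint disjoint_sdiff_sdiff, card_sdiff,
    card_sdiff, hcard, inter_comm]
  omega

lemma IsAmenable.of_tendsto_card_inter (F : ℕ → Finset G) (hF : ∀ i, (F i).Nonempty)
    (h : ∀ g : G, Tendsto (fun i => (#((F i).image (g * ·) ∩ F i) : ℝ) / #(F i)) atTop (𝓝 1)) :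
    IsAmenable G := by
  refine ⟨F, hF, fun g => ?_⟩
  have key : ∀ i, (#(symmDiff ((F i).image (g * ·)) (F i)) : ℝ) / #(F i)
      = 2 - 2 * ((#((F i).image (g * ·) ∩ F i) : ℝ) / #(F i)) := by
    intro i
    have hpos : (0 : ℝ) < #(F i) := by exact_mod_cast (hF i).card_pos
    have hle : #((F i).image (g * ·) ∩ F i) ≤ #(F i) := card_le_card inter_subset_right
    rw [card_symmDiff_image_mul, Nat.cast_mul, Nat.cast_sub hle]
    field_simp
    push_cast
    ring
  convert (tendsto_const_nhds.sub ((h g).const_mul 2)).congr (fun i => (key i).symm) using 1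
  · ext i
    congr!
  · norm_num

lemma card_filter_mul_le_card_image_mul_inter (g : G) {B K : Finset G}
    (hK : ∀ a ∈ K, ∀ b ∈ K, a * b ∈ K)
    (hcoset : ∀ b ∈ B, ∀ b' ∈ B, ∀ k ∈ K, ∀ k' ∈ K, b * k = b' * k' → b = b') :
    #{b ∈ B | ∃ b' ∈ B, b'⁻¹ * g * b ∈ K} * #K ≤ #((B * K).image (g * ·) ∩ (B * K)) := by
  rw [← card_product]
  refine card_le_card_of_injOn (fun z => g * (z.1 * z.2)) ?_ ?_
  · rintro ⟨b, k⟩ hz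
    simp only [coe_product, coe_filter, Set.mem_prod, Set.mem_ofPred_eq, mem_coe] at hz
    obtain ⟨⟨hb, b', hb', hgb⟩, hk⟩ := hz
    simp only [coe_inter, Set.mem_inter_iff, mem_coe, mem_image, Finset.mem_mul]
    refine ⟨⟨b * k, ⟨b, hb, k, hk, rfl⟩, rfl⟩, b', hb', _, hK _ hgb _ hk, by group⟩
  · rintro ⟨b, k⟩ hz ⟨b', k'⟩ hz' heq
    simp only [coe_product, coe_filter, Set.mem_prod, Set.mem_ofPred_eq, mem_coe] at hz hz'
    have heq' : b * k = b' * k' := mul_left_cancel heq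
    obtain rfl := hcoset b hz.1.1 b' hz'.1.1 k hz.2 k' hz'.2 heq'
    simp [mul_left_cancel heq']

lemma card_mul_eq_of_coset {B K : Finset G}
    (hcoset : ∀ b ∈ B, ∀ b' ∈ B, ∀ k ∈ K, ∀ k' ∈ K, b * k = b' * k' → b = b') :
    #(B * K) = #B * #K := by
  refine card_mul_iff.2 ?_
  rintro ⟨b, k⟩ ⟨hb, hk⟩ ⟨b', k'⟩ ⟨hb', hk'⟩ heq
  obtain rfl := hcoset b hb b' hb' k hk k' hk' heq
  simp only at heq
  rw [mul_left_cancel heq]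

/-- The Følner sets are `B i * K i`. -/
theorem IsAmenable.of_finset_mul (B K : ℕ → Finset G) (hB : ∀ i, (B i).Nonempty)
    (hK₁ : ∀ i, 1 ∈ K i) (hK : ∀ i, ∀ a ∈ K i, ∀ b ∈ K i, a * b ∈ K i)
    (hcoset : ∀ i, ∀ b ∈ B i, ∀ b' ∈ B i, ∀ k ∈ K i, ∀ k' ∈ K i, b * k = b' * k' → b = b')
    (hinv : ∀ g : G, Tendsto
      (fun i => (#{b ∈ B i | ∃ b' ∈ B i, b'⁻¹ * g * b ∈ K i} : ℝ) / #(B i)) atTop (𝓝 1)) :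
    IsAmenable G := by
  refine .of_tendsto_card_inter (fun i => B i * K i) (fun i => (hB i).mul ⟨1, hK₁ i⟩) fun g => ?_
  refine tendsto_of_tendsto_of_tendsto_of_le_of_le (hinv g) tendsto_const_nhds (fun i => ?_)
    (fun i => div_le_one_of_le₀ (Nat.cast_le.2 (card_le_card inter_subset_right)) (by positivity))
  have hBpos : (0 : ℝ) < #(B i) := by exact_mod_cast (hB i).card_pos
  have hKpos : (0 : ℝ) < #(K i) := by exact_mod_cast card_pos.2 ⟨1, hK₁ i⟩
  have hle := card_filter_mul_le_card_image_mul_inter g (hK i) (hcoset i)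
  simp only [card_mul_eq_of_coset (hcoset i), Nat.cast_mul]
  rw [div_le_div_iff₀ hBpos (by positivity)]
  have : (#{b ∈ B i | ∃ b' ∈ B i, b'⁻¹ * g * b ∈ K i} : ℝ) * #(K i) ≤
      #((B i * K i).image (g * ·) ∩ (B i * K i)) := by exact_mod_cast hle
  nlinarith

end Amenability

lemma tendsto_prod_sub_div_pow {ι : Type*} [Fintype ι] (c : ι → ℕ) :
    Tendsto (fun i : ℕ => ((∏ j, (i + 1 - c j) : ℕ) : ℝ) / ((i : ℝ) + 1) ^ Fintype.card ι)
      atTop (𝓝 1) := by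
  have hfactor : ∀ j, Tendsto (fun i : ℕ => 1 - (c j : ℝ) * (1 / ((i : ℝ) + 1))) atTop (𝓝 1) := by
    intro j
    simpa using tendsto_const_nhds.sub
      ((tendsto_one_div_add_atTop_nhds_zero_nat (𝕜 := ℝ)).const_mul (c j : ℝ))
  have hprod := tendsto_finsetProd univ fun j _ => hfactor j
  rw [prod_const_one] at hprod
  refine hprod.congr' ?_
  filter_upwards [eventually_ge_atTop (univ.sup c)] with i hi
  have hcj : ∀ j, c j ≤ i + 1 := fun j => (le_sup (mem_univ j)).trans (hi.trans i.le_succ)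
  rw [Nat.cast_prod, ← card_univ, ← prod_const, ← prod_div_distrib]
  refine prod_congr rfl fun j _ => ?_
  rw [Nat.cast_sub (hcj j)]
  field_simp
  push_cast
  ring

lemma exists_nat_neg_le {ι : Type*} [Finite ι] (m : ι → ℤ) : ∃ B : ℕ, ∀ i, -(B : ℤ) ≤ m i := by
  obtain ⟨b, hb⟩ := (Set.finite_range m).bddBelow
  exact ⟨b.natAbs, fun i => by have := hb ⟨i, rfl⟩; omega⟩

lemma Equiv.Perm.finite_setOf_forall_notMem_apply_eq {α : Type*} {s : Set α} (hs : s.Finite) :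
    {σ : Equiv.Perm α | ∀ x ∉ s, σ x = x}.Finite := by
  classical
  have := hs.to_subtype
  refine (Set.finite_range (Equiv.Perm.ofSubtype : Equiv.Perm s →* Equiv.Perm α)).subset ?_
  intro σ hσ
  have hmaps : ∀ x, σ x ∈ s ↔ x ∈ s := fun x => by
    refine ⟨fun hx => ?_, fun hx => ?_⟩
    · by_contra hxs
      rw [hσ x hxs] at hx
      exact hxs hx
    · by_contra hxs
      rw [σ.injective (hσ _ hxs)] at hxs
      exact hxs hx
  exact ⟨σ.subtypePerm hmaps, Equiv.Perm.ofSubtype_subtypePerm _ fun x hx => by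
    by_contra hxs
    exact hx (hσ x hxs)⟩

section Translations

variable {ι : Type*}

def TranslatesAbove (g : ι × ℕ → ι × ℕ) (m : ι → ℤ) (h : ℕ) : Prop :=
  ∀ x : ι × ℕ, h ≤ x.2 → (g x).1 = x.1 ∧ ((g x).2 : ℤ) = x.2 + m x.1

namespace TranslatesAbove

variable {f g : ι × ℕ → ι × ℕ} {m m' : ι → ℤ} {h h' : ℕ}

lemma mono (hg : TranslatesAbove g m h) (hh : h ≤ h') : TranslatesAbove g m h' :=
  fun x hx => hg x (hh.trans hx)

lemma apply_eq_apply (hf : TranslatesAbove f m h) (hg : TranslatesAbove g m h') {x : ι × ℕ}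
    (hx : max h h' ≤ x.2) : f x = g x := by
  obtain ⟨hf₁, hf₂⟩ := hf x (le_of_max_le_left hx)
  obtain ⟨hg₁, hg₂⟩ := hg x (le_of_max_le_right hx)
  exact Prod.ext (hf₁.trans hg₁.symm) (by omega)

lemma eq_of_translatesAbove (hm : TranslatesAbove g m h) (hm' : TranslatesAbove g m' h') :
    m = m' := by
  funext i
  have h₁ := (hm (i, max h h') (le_max_left _ _)).2
  have h₂ := (hm' (i, max h h') (le_max_right _ _)).2
  simp only at h₁ h₂
  omega

lemma comp {B : ℕ} (hf : TranslatesAbove f m h) (hg : TranslatesAbove g m' h')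
    (hB : ∀ i, -(B : ℤ) ≤ m' i) : TranslatesAbove (f ∘ g) (m' + m) (max h' (h + B)) := by
  intro x hx
  obtain ⟨hg₁, hg₂⟩ := hg x (le_of_max_le_left hx)
  have := hB x.1
  have hx' : h + B ≤ x.2 := le_of_max_le_right hx
  obtain ⟨hf₁, hf₂⟩ := hf (g x) (by omega)
  simp only [Function.comp_apply, Pi.add_apply, hf₁, hg₁, hf₂, hg₂, true_and]
  ring

lemma list_ofFn_prod {k c : ℕ} {f : Fin k → Equiv.Perm (ι × ℕ)} {m : Fin k → ι → ℤ}
    (hf : ∀ j, TranslatesAbove (f j) (m j) c) (hm : ∀ j i, -(c : ℤ) ≤ m j i) :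
    TranslatesAbove (List.ofFn f).prod (∑ j, m j) (c + k * c) := by
  induction k with
  | zero => intro x _; simp
  | succ k ih =>
    have hrest := ih (fun j => hf j.succ) (fun j => hm j.succ)
    have hbound : ∀ i, -((k * c : ℕ) : ℤ) ≤ ∑ j : Fin k, m j.succ i := fun i => by
      simpa using Finset.card_nsmul_le_sum univ (fun j : Fin k => m j.succ i) (-c)
        (fun j _ => hm j.succ i)
    rw [List.ofFn_succ, List.prod_cons, Equiv.Perm.coe_mul, Fin.sum_univ_succ, add_comm (m 0)]
    refine ((hf 0).comp hrest ?_).mono (by rw [max_self]; nlinarith)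
    simpa [Finset.sum_apply] using hbound

lemma apply_eq_self (hg : TranslatesAbove g 0 h) {x : ι × ℕ} (hx : h ≤ x.2) : g x = x := by
  obtain ⟨h₁, h₂⟩ := hg x hx
  exact Prod.ext h₁ (by simpa using h₂)

end TranslatesAbove

section RaySegments

variable [Fintype ι] [DecidableEq ι]

def raySegments (N : ι → ℕ) : Finset (ι × ℕ) :=
  univ.biUnion fun i => {i} ×ˢ range (N i)

lemma mem_raySegments {N : ι → ℕ} {x : ι × ℕ} : x ∈ raySegments N ↔ x.2 < N x.1 := by
  obtain ⟨i, k⟩ := x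
  simp [raySegments, eq_comm]

lemma card_raySegments (N : ι → ℕ) : #(raySegments N) = ∑ i, N i := by
  rw [raySegments, card_biUnion]
  · simp
  · intro i _ j _ hij
    simp only [disjoint_left, mem_product, mem_singleton]
    rintro x ⟨rfl, -⟩ ⟨rfl, -⟩
    exact hij rfl

lemma TranslatesAbove.exists_image_raySegments {g : Equiv.Perm (ι × ℕ)} {m : ι → ℤ} {h : ℕ}
    (hg : TranslatesAbove g m h) :
    ∃ N : ℕ, (∀ i, 0 ≤ N + m i) ∧
      (raySegments fun _ => N).image g = raySegments fun i => (N + m i).toNat := by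
  obtain ⟨B, hB⟩ := exists_nat_neg_le m
  set H := (univ ×ˢ range h).sup fun x => (g x).2
  have hH : ∀ x : ι × ℕ, x.2 < h → (g x).2 ≤ H := fun x hx =>
    le_sup (f := fun x => (g x).2) (by simpa using hx)
  refine ⟨h + B + H + 1, fun i => by have := hB i; omega, ?_⟩
  ext y
  simp only [mem_image, mem_raySegments]
  constructor
  · rintro ⟨x, hx, rfl⟩
    rcases lt_or_ge x.2 h with hxh | hxh
    · have := hH x hxh
      have := hB (g x).1
      omega
    · obtain ⟨h₁, h₂⟩ := hg x hxh
      have := hB x.1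
      rw [h₁]
      omega
  · intro hy
    refine ⟨g.symm y, ?_, g.apply_symm_apply y⟩
    by_contra! hx
    obtain ⟨h₁, h₂⟩ := hg (g.symm y) (by omega)
    rw [g.apply_symm_apply] at h₁ h₂
    rw [h₁] at hy
    omega

lemma TranslatesAbove.sum_eq_zero {g : Equiv.Perm (ι × ℕ)} {m : ι → ℤ} {h : ℕ}
    (hg : TranslatesAbove g m h) : ∑ i, m i = 0 := by
  obtain ⟨N, hN, himage⟩ := hg.exists_image_raySegments
  have hcard := congrArg card himage
  rw [card_image_of_injective _ g.injective, card_raySegments, card_raySegments] at hcard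
  have : ∑ i, ((N + m i).toNat : ℤ) = ∑ i, ((N : ℤ) + m i) :=
    sum_congr rfl fun i _ => Int.toNat_of_nonneg (hN i)
  rw [sum_add_distrib] at this
  have hcast : ((∑ _i : ι, N : ℕ) : ℤ) = ∑ i, ((N + m i).toNat : ℤ) := by exact_mod_cast hcard
  push_cast at hcast
  linarith

end RaySegments

end Translations

section RayShift

variable {ι : Type*} [DecidableEq ι] {i k : ι}

/-- The rays `i` and `k`, glued at their origins, form a copy of `ℤ`; translate it by `t`. -/
def rayShift (hik : i ≠ k) (t : ℕ) : Equiv.Perm (ι × ℕ) where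
  toFun x :=
    if x.1 = i then (i, x.2 + t)
    else if x.1 = k then (if t ≤ x.2 then (k, x.2 - t) else (i, x.2))
    else x
  invFun y :=
    if y.1 = i then (if t ≤ y.2 then (i, y.2 - t) else (k, y.2))
    else if y.1 = k then (k, y.2 + t)
    else y
  left_inv := by
    rintro ⟨j, s⟩
    dsimp only
    split_ifs <;> simp_all
  right_inv := by
    rintro ⟨j, s⟩
    dsimp only
    split_ifs <;> simp_all

lemma translatesAbove_rayShift (hik : i ≠ k) (t : ℕ) :
    TranslatesAbove (rayShift hik t) (Pi.single i (t : ℤ) - Pi.single k (t : ℤ)) t := by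
  rintro ⟨j, s⟩ (hs : t ≤ s)
  simp only [rayShift, Equiv.coe_fn_mk, Pi.sub_apply, Pi.single_apply]
  split_ifs <;> simp_all
  omega

end RayShift

lemma translates_iff_exists_translatesAbove {n : ℕ} {g : Fin n × ℕ → Fin n × ℕ}
    {m : Fin n → ℤ} : Translates n g m ↔ ∃ h, TranslatesAbove g m h := by
  constructor
  · rintro ⟨K, hK⟩
    refine ⟨K.sup Prod.snd + 1, fun x hx => hK x fun hxK => ?_⟩
    have := le_sup (f := Prod.snd) hxK
    omega
  · rintro ⟨h, hg⟩
    exact ⟨univ ×ˢ range h, fun x hx => hg x (by simpa using hx)⟩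

namespace Houghton

variable {n : ℕ}

noncomputable def translation (g : Houghton n) : Fin n → ℤ :=
  g.2.choose

lemma exists_translatesAbove_translation (g : Houghton n) :
    ∃ h, TranslatesAbove (g : Equiv.Perm (Fin n × ℕ)) (translation g) h :=
  translates_iff_exists_translatesAbove.1 g.2.choose_spec

lemma translation_eq {g : Houghton n} {m : Fin n → ℤ} {h : ℕ}
    (hg : TranslatesAbove (g : Equiv.Perm (Fin n × ℕ)) m h) : translation g = m :=
  (exists_translatesAbove_translation g).choose_spec.eq_of_translatesAbove hg

lemma translation_one : translation (1 : Houghton n) = 0 :=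
  translation_eq (h := 0) fun x _ => by simp

lemma translation_mul (a b : Houghton n) :
    translation (a * b) = translation a + translation b := by
  obtain ⟨ha, hta⟩ := exists_translatesAbove_translation a
  obtain ⟨hb, htb⟩ := exists_translatesAbove_translation b
  obtain ⟨B, hB⟩ := exists_nat_neg_le (translation b)
  rw [add_comm]
  exact translation_eq (hta.comp htb hB)

lemma sum_translation (g : Houghton n) : ∑ i, translation g i = 0 :=
  (exists_translatesAbove_translation g).choose_spec.sum_eq_zero

lemma translation_eq_zero_iff (g : Houghton n) :
    translation g = 0 ↔ {x | (g : Equiv.Perm (Fin n × ℕ)) x ≠ x}.Finite := by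
  constructor
  · intro h₀
    obtain ⟨h, hg⟩ := exists_translatesAbove_translation g
    rw [h₀] at hg
    refine (univ ×ˢ range h : Finset (Fin n × ℕ)).finite_toSet.subset fun x hx => ?_
    by_contra hxh
    exact hx (hg.apply_eq_self (by simpa using hxh))
  · intro hfin
    obtain ⟨h, hg⟩ := translates_iff_exists_translatesAbove.1
      (⟨hfin.toFinset, fun x hx => by simp_all⟩ : Translates n g 0)
    exact translation_eq hg

def fixingAbove (h : ℕ) : Subgroup (Houghton n) where
  carrier := {a | ∀ x : Fin n × ℕ, h ≤ x.2 → (a : Equiv.Perm (Fin n × ℕ)) x = x}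
  one_mem' _ _ := rfl
  mul_mem' ha hb x hx := by simp [Equiv.Perm.mul_apply, hb x hx, ha x hx]
  inv_mem' ha x hx := (Equiv.symm_apply_eq _).2 (ha x hx).symm

lemma finite_fixingAbove (h : ℕ) :
    ((fixingAbove h : Subgroup (Houghton n)) : Set (Houghton n)).Finite := by
  have hlow : {x : Fin n × ℕ | x.2 < h}.Finite :=
    (univ ×ˢ range h : Finset (Fin n × ℕ)).finite_toSet.subset fun x hx => by simpa using hx
  refine ((Equiv.Perm.finite_setOf_forall_notMem_apply_eq hlow).preimage
    Subtype.val_injective.injOn).subset fun a ha x hx => ha x ?_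
  simpa using hx

noncomputable def fixingAboveFinset (h : ℕ) : Finset (Houghton n) :=
  (finite_fixingAbove h).toFinset

lemma mem_fixingAboveFinset {h : ℕ} {a : Houghton n} :
    a ∈ fixingAboveFinset h ↔ a ∈ fixingAbove h :=
  Set.Finite.mem_toFinset _

lemma translation_eq_zero_of_mem_fixingAbove {h : ℕ} {a : Houghton n}
    (ha : a ∈ fixingAbove h) : translation a = 0 :=
  translation_eq (h := h) fun x hx => by simp [ha x hx]

variable {p : ℕ}

lemma translation_eq_translation_iff {a b : Houghton (p + 1)} :
    translation a = translation b ↔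
      ∀ j : Fin p, translation a j.castSucc = translation b j.castSucc := by
  refine ⟨fun h j => by rw [h], fun h => funext fun i => ?_⟩
  induction i using Fin.lastCases with
  | last =>
    have ha := sum_translation a
    have hb := sum_translation b
    rw [Fin.sum_univ_castSucc] at ha hb
    simp only [h] at ha
    linarith
  | cast j => exact h j

/-- The last coordinate of the translation vector is dropped: it is minus the sum of the others. -/
noncomputable def translationHom : Houghton (p + 1) →* Multiplicative (Fin p → ℤ) where
  toFun g := Multiplicative.ofAdd fun j => translation g j.castSucc
  map_one' := by simp [translation_one]; rfl
  map_mul' a b := by simp [translation_mul]; rfl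

lemma translationHom_eq_one_iff (g : Houghton (p + 1)) :
    translationHom g = 1 ↔ {x | (g : Equiv.Perm (Fin (p + 1) × ℕ)) x ≠ x}.Finite := by
  rw [← translation_eq_zero_iff, ← translation_one, translation_eq_translation_iff, translation_one]
  exact funext_iff

def shiftPerm (v : Fin p → ℕ) : Equiv.Perm (Fin (p + 1) × ℕ) :=
  (List.ofFn fun j => rayShift (Fin.castSucc_lt_last j).ne (v j)).prod

lemma translatesAbove_shiftPerm {v : Fin p → ℕ} {c : ℕ} (hv : ∀ j, v j ≤ c) :
    TranslatesAbove (shiftPerm v)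
      (∑ j, (Pi.single j.castSucc (v j : ℤ) - Pi.single (Fin.last p) (v j : ℤ))) (c + p * c) :=
  TranslatesAbove.list_ofFn_prod (fun j => (translatesAbove_rayShift _ _).mono (hv j))
    fun j i => by simp only [Pi.sub_apply, Pi.single_apply]; split_ifs <;> simp_all

def shift (v : Fin p → ℕ) : Houghton (p + 1) :=
  ⟨shiftPerm v, _, translates_iff_exists_translatesAbove.2
    ⟨_, translatesAbove_shiftPerm fun j => le_sup (f := v) (mem_univ j)⟩⟩

lemma translatesAbove_shift {v : Fin p → ℕ} {c : ℕ} (hv : ∀ j, v j ≤ c) :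
    TranslatesAbove (shift v : Equiv.Perm (Fin (p + 1) × ℕ)) (translation (shift v))
      (c + p * c) := by
  have := translatesAbove_shiftPerm hv
  rwa [← translation_eq (g := shift v) this] at this

lemma translation_shift_castSucc (v : Fin p → ℕ) (j : Fin p) :
    translation (shift v) j.castSucc = v j := by
  rw [translation_eq (translatesAbove_shiftPerm fun j => le_sup (f := v) (mem_univ j))]
  simp [Finset.sum_apply, Pi.single_apply, (Fin.castSucc_lt_last _).ne]

lemma neg_le_translation_shift {v : Fin p → ℕ} {c : ℕ} (hv : ∀ j, v j ≤ c) (i : Fin (p + 1)) :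
    -((p * c : ℕ) : ℤ) ≤ translation (shift v) i := by
  induction i using Fin.lastCases with
  | last =>
    have hsum := sum_translation (shift v)
    rw [Fin.sum_univ_castSucc] at hsum
    simp only [translation_shift_castSucc] at hsum
    have : ∑ j, (v j : ℤ) ≤ p * c := by
      simpa using sum_le_card_nsmul univ (fun j => (v j : ℤ)) c fun j _ => by exact_mod_cast hv j
    push_cast
    linarith
  | cast j => rw [translation_shift_castSucc]; omega

lemma shift_injective : Function.Injective (shift (p := p)) := fun v v' h =>
  funext fun j => by exact_mod_cast
    (translation_shift_castSucc v j).symm.trans (h ▸ translation_shift_castSucc v' j)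

lemma translationHom_apply (g : Houghton (p + 1)) :
    translationHom g = Multiplicative.ofAdd fun j => translation g j.castSucc :=
  rfl

lemma translationHom_surjective : Function.Surjective (translationHom (p := p)) := by
  intro u
  refine ⟨shift (fun j => (u.toAdd j).toNat) * (shift fun j => (-u.toAdd j).toNat)⁻¹, ?_⟩
  rw [map_mul, map_inv, translationHom_apply, translationHom_apply]
  apply Multiplicative.toAdd.injective
  funext j
  simp only [translation_shift_castSucc, toAdd_mul, toAdd_inv, toAdd_ofAdd, Pi.add_apply,
    Pi.neg_apply]
  omega

/-- `(i + 1) ^ 2` eventually exceeds the heights, linear in `i`, above which `g * shift v` and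
`shift v'` are translations. -/
lemma shift_inv_mul_mul_shift_mem_fixingAbove (g : Houghton (p + 1)) :
    ∃ C, ∀ i ≥ C, ∀ v v' : Fin p → ℕ, (∀ j, v j ≤ i) → (∀ j, v' j ≤ i) →
      (∀ j, (v' j : ℤ) = v j + translation g j.castSucc) →
      (shift v')⁻¹ * g * shift v ∈ fixingAbove ((i + 1) ^ 2) := by
  obtain ⟨h, hg⟩ := exists_translatesAbove_translation g
  refine ⟨h + p, fun i hi v v' hv hv' hvv' x hx => ?_⟩
  have hcomp := hg.comp (translatesAbove_shift hv) (neg_le_translation_shift hv)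
  have hvec : translation (shift v) + translation g = translation (shift v') := by
    rw [add_comm (translation (shift v)), ← translation_mul g (shift v),
      translation_eq_translation_iff]
    intro j
    rw [translation_mul, Pi.add_apply, translation_shift_castSucc, translation_shift_castSucc,
      hvv' j]
    ring
  rw [hvec] at hcomp
  have hagree := hcomp.apply_eq_apply (translatesAbove_shift hv') (x := x) (by
    simp only [max_le_iff]
    refine ⟨⟨?_, ?_⟩, ?_⟩ <;> nlinarith)
  change (shift v' : Equiv.Perm _)⁻¹ ((g : Equiv.Perm _) ((shift v : Equiv.Perm _) x)) = x
  rw [show (g : Equiv.Perm _) ((shift v : Equiv.Perm _) x) = (shift v' : Equiv.Perm _) x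
    from hagree]
  simp

lemma shift_eq_of_mul_eq_mul {h h' : ℕ} {v v' : Fin p → ℕ} {a a' : Houghton (p + 1)}
    (ha : a ∈ fixingAbove h) (ha' : a' ∈ fixingAbove h') (heq : shift v * a = shift v' * a') :
    shift v = shift v' := by
  have := congrArg translation heq
  rw [translation_mul, translation_mul, translation_eq_zero_of_mem_fixingAbove ha,
    translation_eq_zero_of_mem_fixingAbove ha', add_zero, add_zero] at this
  exact congrArg shift (funext fun j => by
    simpa [translation_shift_castSucc] using congrFun this j.castSucc)

variable [DecidableEq (Houghton (p + 1))]

def shiftBox (i : ℕ) : Finset (Houghton (p + 1)) :=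
  (Fintype.piFinset fun _ : Fin p => range (i + 1)).image shift

lemma card_shiftBox (i : ℕ) : #(shiftBox (p := p) i) = (i + 1) ^ p := by
  simp [shiftBox, card_image_of_injective _ shift_injective]

/-- If `w` is the translation of `g` and `|w j| ≤ v j ≤ i - |w j|`, then `g` moves `shift v` to
`shift (v + w)` modulo `fixingAbove`. -/
lemma prod_le_card_filter_shiftBox (g : Houghton (p + 1)) : ∃ C, ∀ i ≥ C,
    ∏ j : Fin p, (i + 1 - 2 * (translation g j.castSucc).natAbs) ≤
      #{b ∈ shiftBox (p := p) i | ∃ b' ∈ shiftBox i,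
        b'⁻¹ * g * b ∈ fixingAboveFinset ((i + 1) ^ 2)} := by
  obtain ⟨C, hC⟩ := shift_inv_mul_mul_shift_mem_fixingAbove g
  refine ⟨C, fun i hi => ?_⟩
  have hsub : (Fintype.piFinset fun j => Ico (translation g j.castSucc).natAbs
      (i + 1 - (translation g j.castSucc).natAbs)).image shift ⊆
      {b ∈ shiftBox (p := p) i | ∃ b' ∈ shiftBox i,
        b'⁻¹ * g * b ∈ fixingAboveFinset ((i + 1) ^ 2)} := by
    intro b hb
    obtain ⟨v, hv, rfl⟩ := mem_image.1 hb
    have hv : ∀ j, (translation g j.castSucc).natAbs ≤ v j ∧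
        v j < i + 1 - (translation g j.castSucc).natAbs := fun j =>
      mem_Ico.1 (Fintype.mem_piFinset.1 hv j)
    have hv' : ∀ j, (((v j + translation g j.castSucc).toNat : ℕ) : ℤ) =
        v j + translation g j.castSucc := fun j => by
      have := hv j; omega
    rw [mem_filter]
    simp only [shiftBox, mem_image, Fintype.mem_piFinset, mem_range, mem_fixingAboveFinset]
    refine ⟨⟨v, fun j => by have := hv j; omega, rfl⟩, _, ⟨_, fun j => ?_, rfl⟩,
      hC i hi v _ (fun j => by have := hv j; omega) (fun j => ?_) hv'⟩ <;>
    · have := hv j; have := hv' j; omega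
  refine le_of_eq_of_le ?_ (card_le_card hsub)
  rw [card_image_of_injective _ shift_injective, Fintype.card_piFinset]
  exact prod_congr rfl fun j _ => by rw [Nat.card_Ico]; omega

lemma tendsto_card_filter_shiftBox (g : Houghton (p + 1)) :
    Tendsto (fun i => (#{b ∈ shiftBox (p := p) i | ∃ b' ∈ shiftBox i,
        b'⁻¹ * g * b ∈ fixingAboveFinset ((i + 1) ^ 2)} : ℝ) /
      #(shiftBox (p := p) i)) atTop (𝓝 1) := by
  obtain ⟨C, hC⟩ := prod_le_card_filter_shiftBox g
  refine tendsto_of_tendsto_of_tendsto_of_le_of_le'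
    (by simpa using tendsto_prod_sub_div_pow fun j : Fin p => 2 * (translation g j.castSucc).natAbs)
    tendsto_const_nhds ?_ (Eventually.of_forall fun i => ?_)
  · filter_upwards [eventually_ge_atTop C] with i hi
    rw [card_shiftBox]
    push_cast
    gcongr
    exact_mod_cast hC i hi
  · exact div_le_one_of_le₀ (Nat.cast_le.2 (card_filter_le _ _)) (Nat.cast_nonneg _)

end Houghton

theorem isAmenable_houghton_succ (p : ℕ) : IsAmenable (Houghton (p + 1)) := by
  classical
  open Houghton in
  refine IsAmenable.of_finset_mul shiftBox (fun i => fixingAboveFinset ((i + 1) ^ 2))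
    (fun i => ⟨_, mem_image_of_mem _ (Fintype.mem_piFinset.2 fun _ => mem_range.2 i.succ_pos)⟩)
    (fun i => mem_fixingAboveFinset.2 (one_mem _))
    (fun i a ha b hb => mem_fixingAboveFinset.2
      (mul_mem (mem_fixingAboveFinset.1 ha) (mem_fixingAboveFinset.1 hb)))
    ?_ tendsto_card_filter_shiftBox
  intro i b hb b' hb' k hk k' hk' heq
  obtain ⟨v, -, rfl⟩ := mem_image.1 hb
  obtain ⟨v', -, rfl⟩ := mem_image.1 hb'
  exact Houghton.shift_eq_of_mul_eq_mul (mem_fixingAboveFinset.1 hk)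
    (mem_fixingAboveFinset.1 hk') heq

/-- Houghton's group `H_n` is amenable for every `n ≥ 1`: it is an extension
of the abelian group `ℤ^{n−1}` by the locally finite group `Σ_{n,∞}`, i.e.
there is a surjection `H_n → ℤ^{n−1}` whose kernel consists exactly of the
finitely supported permutations. -/
theorem houghton_amenable (n : ℕ) (hn : 1 ≤ n) :
    IsAmenable ↥(Houghton n) ∧
    ∃ φ : ↥(Houghton n) →* Multiplicative (Fin (n - 1) → ℤ),
      Function.Surjective φ ∧
      ∀ g : ↥(Houghton n),
        φ g = 1 ↔ {x | (g : Equiv.Perm (Fin n × ℕ)) x ≠ x}.Finite := by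
  obtain ⟨p, rfl⟩ : ∃ p, n = p + 1 := ⟨n - 1, by omega⟩
  exact ⟨isAmenable_houghton_succ p, Houghton.translationHom, Houghton.translationHom_surjective,
    Houghton.translationHom_eq_one_iff⟩
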